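/- arXiv:0912.4434 — 3 statements merged into one kernel-verified Lean document; each statement's English description precedes it below -/
import Mathlib

section
/- Let g(β) = ‖(β)₊‖₂ + ‖(−β)₊‖₂ on ℝ^T. The subdifferential of g at β₀ = 0 equals the set {θ ∈ ℝ^T : max(‖(θ)₊‖₂, ‖(−θ)₊‖₂) ≤ 1}. -/
open BigOperators

/-- componentwise positive part -/
def pPart {T : ℕ} (β : Fin T → ℝ) : Fin T → ℝ := fun t => max (β t) 0

/-- Euclidean norm -/
noncomputable def norm2 {T : ℕ} (β : Fin T → ℝ) : ℝ := Real.sqrt (∑ t, (β t) ^ 2)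

/-- the Cooperative-LASSO penalty -/
noncomputable def coop {T : ℕ} (β : Fin T → ℝ) : ℝ :=
  norm2 (pPart β) + norm2 (pPart (-β))

lemma norm2_nonneg {T : ℕ} (β : Fin T → ℝ) : 0 ≤ norm2 β := Real.sqrt_nonneg _

lemma sq_norm2 {T : ℕ} (β : Fin T → ℝ) : norm2 β ^ 2 = ∑ t, (β t) ^ 2 := by
  rw [norm2, Real.sq_sqrt]
  exact Finset.sum_nonneg fun t _ => sq_nonneg _

lemma cs {T : ℕ} (f g : Fin T → ℝ) : (∑ t, f t * g t) ≤ norm2 f * norm2 g := by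
  have h := Finset.sum_mul_sq_le_sq_mul_sq Finset.univ f g
  rw [← sq_norm2 f, ← sq_norm2 g, ← mul_pow] at h
  nlinarith [h, mul_nonneg (norm2_nonneg f) (norm2_nonneg g)]

lemma key (a b : ℝ) : a * b ≤ max a 0 * max b 0 + max (-a) 0 * max (-b) 0 := by
  have h1 : max a 0 - max (-a) 0 = a := max_zero_sub_max_neg_zero_eq_self a
  have h2 : max b 0 - max (-b) 0 = b := max_zero_sub_max_neg_zero_eq_self b
  nlinarith [le_max_right a 0, le_max_right b 0, le_max_right (-a) 0, le_max_right (-b) 0,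
    mul_nonneg (le_max_right a 0) (le_max_right (-b) 0),
    mul_nonneg (le_max_right (-a) 0) (le_max_right b 0)]

lemma coop_zero {T : ℕ} : coop (0 : Fin T → ℝ) = 0 := by
  simp [coop, norm2, pPart]

/-- The subdifferential of the Cooperative-LASSO norm at 0 is
`{θ : max(‖(θ)₊‖₂, ‖(−θ)₊‖₂) ≤ 1}`. -/
theorem coop_subdiff_at_zero (T : ℕ) :
    {θ : Fin T → ℝ | ∀ β : Fin T → ℝ, coop β - coop (0 : Fin T → ℝ) ≥ ∑ t, θ t * (β t - 0)}
      = {θ : Fin T → ℝ | max (norm2 (pPart θ)) (norm2 (pPart (-θ))) ≤ 1} := by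
  ext θ
  simp only [Set.mem_setOf_eq, coop_zero, sub_zero]
  constructor
  · intro h
    refine max_le ?_ ?_
    · have h1 := h (pPart θ)
      have e1 : pPart (pPart θ) = pPart θ := by
        funext t; simp [pPart, le_max_right]
      have e2 : pPart (-(pPart θ)) = 0 := by
        funext t; simp [pPart]
      have e3 : ∑ t, θ t * pPart θ t = norm2 (pPart θ) ^ 2 := by
        rw [sq_norm2]
        refine Finset.sum_congr rfl fun t _ => ?_
        rcases le_total (θ t) 0 with ht | ht
        · simp [pPart, max_eq_right ht]
        · simp [pPart, max_eq_left ht, sq, mul_comm]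
      rw [coop, e1, e2, e3] at h1
      simp only [norm2, Pi.zero_apply] at h1
      have h1' : norm2 (pPart θ) ≥ norm2 (pPart θ) ^ 2 := by
        simpa [norm2] using h1
      nlinarith [norm2_nonneg (pPart θ)]
    · have h1 := h (-(pPart (-θ)))
      have e1 : pPart (-(pPart (-θ))) = 0 := by
        funext t; simp [pPart]
      have e2 : pPart (-(-(pPart (-θ)))) = pPart (-θ) := by
        funext t; simp [pPart, le_max_right]
      have e3 : ∑ t, θ t * (-(pPart (-θ))) t = norm2 (pPart (-θ)) ^ 2 := by
        rw [sq_norm2]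
        refine Finset.sum_congr rfl fun t _ => ?_
        rcases le_total (θ t) 0 with ht | ht
        · have : (0:ℝ) ≤ -θ t := by linarith
          simp [pPart, max_eq_left this]; ring
        · have : -θ t ≤ 0 := by linarith
          simp [pPart, max_eq_right this]
      rw [coop, e1, e2, e3] at h1
      have h1' : norm2 (pPart (-θ)) ≥ norm2 (pPart (-θ)) ^ 2 := by
        simpa [norm2, pPart] using h1
      nlinarith [norm2_nonneg (pPart (-θ))]
  · intro hmax β
    have hp : norm2 (pPart θ) ≤ 1 := le_trans (le_max_left _ _) hmax
    have hm : norm2 (pPart (-θ)) ≤ 1 := le_trans (le_max_right _ _) hmax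
    have step1 : ∑ t, θ t * β t ≤
        (∑ t, pPart θ t * pPart β t) + ∑ t, pPart (-θ) t * pPart (-β) t := by
      rw [← Finset.sum_add_distrib]
      exact Finset.sum_le_sum fun t _ => by simpa [pPart] using key (θ t) (β t)
    have c1 : (∑ t, pPart θ t * pPart β t) ≤ norm2 (pPart θ) * norm2 (pPart β) := cs _ _
    have c2 : (∑ t, pPart (-θ) t * pPart (-β) t) ≤ norm2 (pPart (-θ)) * norm2 (pPart (-β)) :=
      cs _ _
    have b1 : norm2 (pPart θ) * norm2 (pPart β) ≤ norm2 (pPart β) :=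
      mul_le_of_le_one_left (norm2_nonneg _) hp
    have b2 : norm2 (pPart (-θ)) * norm2 (pPart (-β)) ≤ norm2 (pPart (-β)) :=
      mul_le_of_le_one_left (norm2_nonneg _) hm
    rw [coop]
    linarith
end

section
/- Let g(β) = ‖(β)₊‖₂ + ‖(−β)₊‖₂ on ℝ^T and let β₀ satisfy ‖(β₀)₊‖₂ = 0 and ‖(−β₀)₊‖₂ ≠ 0. Let A be the set of indices with nonzero entries of β₀ and A^c its complement. Then the subdifferential of g at β₀ is {‖(−β₀)₊‖₂⁻¹ β₀ + θ : θ_A = 0, ‖(θ_{A^c})₊‖₂ ≤ 1, and ‖(−θ_{A^c})₊‖₂ = 0}. -/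
open BigOperators

private lemma norm2_eq_zero_iff {T : ℕ} (f : Fin T → ℝ) :
    norm2 f = 0 ↔ ∀ t, f t = 0 := by
  rw [norm2, Real.sqrt_eq_zero']
  constructor
  · intro h t
    have hnn : ∀ i ∈ Finset.univ, (0:ℝ) ≤ f i ^ 2 := fun i _ => sq_nonneg _
    have h0 : ∑ t, f t ^ 2 = 0 := le_antisymm h (Finset.sum_nonneg hnn)
    have := (Finset.sum_eq_zero_iff_of_nonneg hnn).1 h0 t (Finset.mem_univ t)
    exact pow_eq_zero_iff (two_ne_zero) |>.1 this
  · intro h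
    simp [h]

private lemma cs_sqrt {T : ℕ} (s : Finset (Fin T)) (f g : Fin T → ℝ) :
    ∑ i ∈ s, f i * g i ≤
      Real.sqrt (∑ i ∈ s, f i ^ 2) * Real.sqrt (∑ i ∈ s, g i ^ 2) := by
  have h := Finset.sum_mul_sq_le_sq_mul_sq s f g
  calc ∑ i ∈ s, f i * g i ≤ Real.sqrt ((∑ i ∈ s, f i * g i) ^ 2) := by
        rw [Real.sqrt_sq_eq_abs]; exact le_abs_self _
    _ ≤ Real.sqrt ((∑ i ∈ s, f i ^ 2) * ∑ i ∈ s, g i ^ 2) := Real.sqrt_le_sqrt h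
    _ = _ := Real.sqrt_mul (Finset.sum_nonneg fun i _ => sq_nonneg _) _

private lemma sqrt_le_aux {a b : ℝ} (ha : 0 ≤ a) (hb : 0 < b) :
    Real.sqrt a ≤ (a + b) / (2 * Real.sqrt b) := by
  rw [le_div_iff₀ (by positivity)]
  nlinarith [sq_nonneg (Real.sqrt a - Real.sqrt b), Real.sq_sqrt ha, Real.sq_sqrt hb.le,
    Real.sqrt_nonneg a, Real.sqrt_nonneg b]

/-- Subdifferential of the Cooperative-LASSO norm at a point β₀ with no positive
component and at least one negative component: it is the set of vectors
`‖(−β₀)₊‖₂⁻¹ β₀ + θ` where θ vanishes on the support A of β₀,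
`‖(θ_{Aᶜ})₊‖₂ ≤ 1` and `‖(−θ_{Aᶜ})₊‖₂ = 0`. -/
theorem coop_subdiff_neg_orthant (T : ℕ) (β₀ : Fin T → ℝ)
    (hpos : norm2 (pPart β₀) = 0) (hneg : norm2 (pPart (-β₀)) ≠ 0) :
    {θ' : Fin T → ℝ | ∀ β : Fin T → ℝ,
        coop β - coop β₀ ≥ ∑ t, θ' t * (β t - β₀ t)}
      = {θ' : Fin T → ℝ | ∃ θ : Fin T → ℝ,
          θ' = (norm2 (pPart (-β₀)))⁻¹ • β₀ + θ ∧
          (∀ t, β₀ t ≠ 0 → θ t = 0) ∧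
          Real.sqrt (∑ t ∈ Finset.univ.filter (fun t => β₀ t = 0),
              (max (θ t) 0) ^ 2) ≤ 1 ∧
          Real.sqrt (∑ t ∈ Finset.univ.filter (fun t => β₀ t = 0),
              (max (-θ t) 0) ^ 2) = 0} := by
  classical
  ext θ'
  simp only [Set.mem_setOf_eq]
  set n := norm2 (pPart (-β₀)) with hn_def
  have hβ₀le : ∀ t, β₀ t ≤ 0 := by
    intro t
    have h : max (β₀ t) 0 = 0 := (norm2_eq_zero_iff (pPart β₀)).1 hpos t
    calc β₀ t ≤ max (β₀ t) 0 := le_max_left _ _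
      _ = 0 := h
  have hpp : ∀ t, pPart (-β₀) t = -β₀ t := by
    intro t
    simp only [pPart, Pi.neg_apply]
    exact max_eq_left (neg_nonneg.2 (hβ₀le t))
  have hn_nonneg : 0 ≤ n := Real.sqrt_nonneg _
  have hn_pos : 0 < n := lt_of_le_of_ne hn_nonneg (Ne.symm hneg)
  have hnsq : n ^ 2 = ∑ t, β₀ t ^ 2 := by
    rw [hn_def, norm2, Real.sq_sqrt (Finset.sum_nonneg fun i _ => sq_nonneg _)]
    exact Finset.sum_congr rfl fun t _ => by rw [hpp t]; ring
  have hcoop₀ : coop β₀ = n := by rw [coop, hpos, zero_add]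
  constructor
  · -- subgradient inequality → explicit form
    intro H
    set θ : Fin T → ℝ := fun t => θ' t - n⁻¹ * β₀ t with hθ_def
    clear_value θ
    -- key inequality from testing coordinate perturbations
    have K : ∀ t, ∀ v : ℝ, v ≤ 0 → θ' t * (v - β₀ t) ≤ (v ^ 2 - β₀ t ^ 2) / (2 * n) := by
      intro t v hv
      set β : Fin T → ℝ := Function.update β₀ t v with hβ_def
      have hβle : ∀ t', β t' ≤ 0 := by
        intro t'
        by_cases h : t' = t
        · subst h; simp [hβ_def, hv]
        · simp [hβ_def, Function.update_of_ne h, hβ₀le t']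
      have h1 : norm2 (pPart β) = 0 := by
        rw [norm2_eq_zero_iff]
        intro t'
        simp only [pPart]
        exact max_eq_right (hβle t')
      have hsum : ∑ t', β t' ^ 2 = (∑ t', β₀ t' ^ 2) - β₀ t ^ 2 + v ^ 2 := by
        have hfun : (fun t' => β t' ^ 2) = Function.update (fun t' => β₀ t' ^ 2) t (v ^ 2) := by
          funext t'
          by_cases h : t' = t
          · subst h; simp [hβ_def]
          · simp [hβ_def, Function.update_of_ne h]
        rw [hfun, Finset.sum_update_of_mem (Finset.mem_univ t)]
        have herase : ∑ x ∈ Finset.univ \ {t}, β₀ x ^ 2 = (∑ t', β₀ t' ^ 2) - β₀ t ^ 2 := by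
          rw [Finset.sum_sdiff_eq_sub (Finset.singleton_subset_iff.2 (Finset.mem_univ t))]
          simp
        rw [herase]; ring
      have hsum_nn : 0 ≤ (∑ t', β₀ t' ^ 2) - β₀ t ^ 2 + v ^ 2 := by
        rw [← hsum]; exact Finset.sum_nonneg fun i _ => sq_nonneg _
      have h2 : norm2 (pPart (-β)) = Real.sqrt (n ^ 2 + (v ^ 2 - β₀ t ^ 2)) := by
        rw [norm2]
        congr 1
        rw [hnsq]
        have : ∀ t', pPart (-β) t' ^ 2 = β t' ^ 2 := by
          intro t'
          simp only [pPart, Pi.neg_apply]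
          rw [max_eq_left (neg_nonneg.2 (hβle t'))]
          ring
        rw [Finset.sum_congr rfl fun t' _ => this t', hsum]
        ring
      have hrhs : ∑ t', θ' t' * (β t' - β₀ t') = θ' t * (v - β₀ t) := by
        have h1 : ∑ t', θ' t' * (β t' - β₀ t') = θ' t * (β t - β₀ t) :=
          Finset.sum_eq_single t
            (fun b _ hb => by simp [hβ_def, Function.update_of_ne hb])
            (fun h => absurd (Finset.mem_univ t) h)
        rw [h1]
        simp [hβ_def]
      have hH := H β
      rw [hrhs, hcoop₀, coop, h1, zero_add, h2] at hH
      have hsqrt : Real.sqrt (n ^ 2 + (v ^ 2 - β₀ t ^ 2)) ≤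
          n + (v ^ 2 - β₀ t ^ 2) / (2 * n) := by
        have ha : 0 ≤ n ^ 2 + (v ^ 2 - β₀ t ^ 2) := by rw [hnsq]; linarith [hsum_nn]
        have hb : (0:ℝ) < n ^ 2 := by positivity
        have := sqrt_le_aux ha hb
        rw [Real.sqrt_sq hn_nonneg] at this
        calc Real.sqrt (n ^ 2 + (v ^ 2 - β₀ t ^ 2))
            ≤ (n ^ 2 + (v ^ 2 - β₀ t ^ 2) + n ^ 2) / (2 * n) := this
          _ = n + (v ^ 2 - β₀ t ^ 2) / (2 * n) := by field_simp; ring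
      linarith
    -- consequence: ∀ s with β₀ t + s ≤ 0, θ t * s ≤ s^2 / (2n)
    have K' : ∀ t, ∀ s : ℝ, β₀ t + s ≤ 0 → θ t * s ≤ s ^ 2 / (2 * n) := by
      intro t s hs
      have := K t (β₀ t + s) hs
      have hexp : (β₀ t + s) ^ 2 - β₀ t ^ 2 = 2 * s * β₀ t + s ^ 2 := by ring
      rw [add_sub_cancel_left, hexp] at this
      have h2n : (0:ℝ) < 2 * n := by linarith
      rw [le_div_iff₀ h2n] at this ⊢
      have hexpand : θ t * s * (2 * n) = θ' t * s * (2 * n) - 2 * (n⁻¹ * n) * (β₀ t * s) := by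
        rw [hθ_def]
        ring
      rw [hexpand, inv_mul_cancel₀ (ne_of_gt hn_pos)]
      nlinarith [this]
    have hθnn : ∀ t, 0 ≤ θ t := by
      intro t
      by_contra hc
      push_neg at hc
      have hs : β₀ t + n * θ t ≤ 0 := by nlinarith [hβ₀le t]
      have hK := K' t (n * θ t) hs
      have heq : (n * θ t) ^ 2 / (2 * n) = n * θ t ^ 2 / 2 := by field_simp
      rw [heq] at hK
      have h1 : θ t * (n * θ t) = n * θ t ^ 2 := by ring
      rw [h1] at hK
      have h2 : 0 < θ t ^ 2 := by nlinarith
      linarith [mul_pos hn_pos h2]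
    have hθA : ∀ t, β₀ t ≠ 0 → θ t = 0 := by
      intro t ht
      have hlt : β₀ t < 0 := lt_of_le_of_ne (hβ₀le t) ht
      refine le_antisymm ?_ (hθnn t)
      by_contra hc
      push_neg at hc
      set s := min (-β₀ t) (n * θ t) with hs_def
      have hs_pos : 0 < s := lt_min (by linarith) (by positivity)
      have hs1 : β₀ t + s ≤ 0 := by
        have := min_le_left (-β₀ t) (n * θ t); linarith
      have hs2 : s ≤ n * θ t := min_le_right _ _
      have hK := K' t s hs1
      have h2n : (0:ℝ) < 2 * n := by linarith
      rw [le_div_iff₀ h2n] at hK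
      nlinarith [mul_pos hs_pos (mul_pos hn_pos hc), mul_le_mul_of_nonneg_left hs2 hs_pos.le]
    refine ⟨θ, ?_, hθA, ?_, ?_⟩
    · funext t
      simp only [Pi.add_apply, Pi.smul_apply, smul_eq_mul, hθ_def]
      ring
    · -- norm bound: test with β = β₀ + θ
      set β : Fin T → ℝ := fun t => β₀ t + θ t with hβ_def
      set m := Real.sqrt (∑ t ∈ Finset.univ.filter (fun t => β₀ t = 0), θ t ^ 2) with hm_def
      have hm_nn : 0 ≤ m := Real.sqrt_nonneg _
      have h1 : norm2 (pPart β) = m := by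
        rw [norm2, hm_def]
        congr 1
        rw [← Finset.sum_filter_add_sum_filter_not Finset.univ (fun t => β₀ t = 0)]
        have hz : ∑ t ∈ Finset.univ.filter (fun t => ¬ β₀ t = 0), pPart β t ^ 2 = 0 := by
          apply Finset.sum_eq_zero
          intro t htm
          have ht : β₀ t ≠ 0 := (Finset.mem_filter.1 htm).2
          have : pPart β t = 0 := by
            simp only [pPart, hβ_def]
            rw [hθA t ht, add_zero]
            exact max_eq_right (hβ₀le t)
          rw [this]; ring
        rw [hz, add_zero]
        apply Finset.sum_congr rfl
        intro t htm
        have ht : β₀ t = 0 := (Finset.mem_filter.1 htm).2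
        simp only [pPart, hβ_def, ht, zero_add]
        rw [max_eq_left (hθnn t)]
      have h2 : norm2 (pPart (-β)) = n := by
        have : ∀ t, pPart (-β) t ^ 2 = β₀ t ^ 2 := by
          intro t
          simp only [pPart, Pi.neg_apply, hβ_def]
          by_cases ht : β₀ t = 0
          · rw [ht, max_eq_right (by simpa using hθnn t)]
          · rw [hθA t ht, add_zero, max_eq_left (neg_nonneg.2 (hβ₀le t))]; ring
        rw [norm2, Finset.sum_congr rfl fun t _ => this t, ← hnsq,
          Real.sqrt_sq hn_nonneg]
      have hrhs : ∑ t, θ' t * (β t - β₀ t) = m ^ 2 := by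
        have hθ't : ∀ t, θ' t * (β t - β₀ t) = (n⁻¹ * β₀ t + θ t) * θ t := by
          intro t
          simp only [hβ_def, add_sub_cancel_left]
          congr 1
          rw [hθ_def]; ring
        rw [Finset.sum_congr rfl fun t _ => hθ't t]
        rw [← Finset.sum_filter_add_sum_filter_not Finset.univ (fun t => β₀ t = 0)]
        have hz : ∑ t ∈ Finset.univ.filter (fun t => ¬ β₀ t = 0),
            (n⁻¹ * β₀ t + θ t) * θ t = 0 := by
          apply Finset.sum_eq_zero
          intro t htm
          rw [hθA t (Finset.mem_filter.1 htm).2]; ring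
        rw [hz, add_zero, hm_def, Real.sq_sqrt (Finset.sum_nonneg fun i _ => sq_nonneg _)]
        apply Finset.sum_congr rfl
        intro t htm
        rw [(Finset.mem_filter.1 htm).2]; ring
      have hH := H β
      rw [hrhs, hcoop₀, coop, h1, h2] at hH
      have hm1 : m ≤ 1 := by nlinarith
      have : ∑ t ∈ Finset.univ.filter (fun t => β₀ t = 0), (max (θ t) 0) ^ 2
          = ∑ t ∈ Finset.univ.filter (fun t => β₀ t = 0), θ t ^ 2 :=
        Finset.sum_congr rfl fun t _ => by rw [max_eq_left (hθnn t)]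
      rw [this]; exact hm1
    · rw [Real.sqrt_eq_zero']
      apply le_of_eq
      apply Finset.sum_eq_zero
      intro t _
      rw [max_eq_right (by simpa using hθnn t)]; ring
  · -- explicit form → subgradient inequality
    rintro ⟨θ, rfl, hA, hle, hzero⟩
    intro β
    have hθS : ∀ t, β₀ t = 0 → 0 ≤ θ t := by
      intro t ht
      have hnn : ∀ i ∈ Finset.univ.filter (fun t => β₀ t = 0),
          (0:ℝ) ≤ (max (-θ i) 0) ^ 2 := fun i _ => sq_nonneg _
      have hsum0 : ∑ t ∈ Finset.univ.filter (fun t => β₀ t = 0), (max (-θ t) 0) ^ 2 = 0 := by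
        have := Real.sqrt_eq_zero'.1 hzero
        exact le_antisymm this (Finset.sum_nonneg hnn)
      have := (Finset.sum_eq_zero_iff_of_nonneg hnn).1 hsum0 t
        (Finset.mem_filter.2 ⟨Finset.mem_univ t, ht⟩)
      have hmax : max (-θ t) 0 = 0 := pow_eq_zero_iff two_ne_zero |>.1 this
      have : -θ t ≤ 0 := by
        calc -θ t ≤ max (-θ t) 0 := le_max_left _ _
          _ = 0 := hmax
      linarith
    set S := Finset.univ.filter (fun t => β₀ t = 0) with hS_def
    have hN1 : (0:ℝ) ≤ norm2 (pPart β) := Real.sqrt_nonneg _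
    have hN2 : (0:ℝ) ≤ norm2 (pPart (-β)) := Real.sqrt_nonneg _
    -- bound the θ part
    have E1 : ∑ t, θ t * (β t - β₀ t) = ∑ t ∈ S, θ t * β t := by
      rw [← Finset.sum_filter_add_sum_filter_not Finset.univ (fun t => β₀ t = 0)]
      have hz : ∑ t ∈ Finset.univ.filter (fun t => ¬ β₀ t = 0), θ t * (β t - β₀ t) = 0 := by
        apply Finset.sum_eq_zero
        intro t htm
        rw [hA t (Finset.mem_filter.1 htm).2]; ring
      rw [hz, add_zero]
      apply Finset.sum_congr rfl
      intro t htm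
      rw [(Finset.mem_filter.1 htm).2]; ring
    have E2 : ∑ t ∈ S, θ t * β t ≤ norm2 (pPart β) := by
      have step1 : ∑ t ∈ S, θ t * β t ≤ ∑ t ∈ S, θ t * pPart β t := by
        apply Finset.sum_le_sum
        intro t htm
        exact mul_le_mul_of_nonneg_left (le_max_left _ _)
          (hθS t (Finset.mem_filter.1 htm).2)
      have step2 := cs_sqrt S θ (pPart β)
      have hθ_le : Real.sqrt (∑ t ∈ S, θ t ^ 2) ≤ 1 := by
        have : ∑ t ∈ S, θ t ^ 2 = ∑ t ∈ S, (max (θ t) 0) ^ 2 :=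
          Finset.sum_congr rfl fun t htm => by
            rw [max_eq_left (hθS t (Finset.mem_filter.1 htm).2)]
        rw [this]; exact hle
      have hsub : Real.sqrt (∑ t ∈ S, pPart β t ^ 2) ≤ norm2 (pPart β) := by
        rw [norm2]
        apply Real.sqrt_le_sqrt
        exact Finset.sum_le_sum_of_subset_of_nonneg (Finset.filter_subset _ _)
          (fun i _ _ => sq_nonneg _)
      calc ∑ t ∈ S, θ t * β t ≤ ∑ t ∈ S, θ t * pPart β t := step1
        _ ≤ Real.sqrt (∑ t ∈ S, θ t ^ 2) * Real.sqrt (∑ t ∈ S, pPart β t ^ 2) := step2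
        _ ≤ 1 * norm2 (pPart β) := by
            apply mul_le_mul hθ_le hsub (Real.sqrt_nonneg _) zero_le_one
        _ = norm2 (pPart β) := one_mul _
    -- bound the β₀ part
    have E3 : ∑ t, β₀ t * β t ≤ n * norm2 (pPart (-β)) := by
      have step1 : ∑ t, β₀ t * β t ≤ ∑ t, pPart (-β₀) t * pPart (-β) t := by
        apply Finset.sum_le_sum
        intro t _
        have h1 : β₀ t * β t = (-β₀ t) * (-β t) := by ring
        rw [h1, hpp t]
        exact mul_le_mul_of_nonneg_left (le_max_left _ _) (neg_nonneg.2 (hβ₀le t))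
      have step2 := cs_sqrt Finset.univ (pPart (-β₀)) (pPart (-β))
      calc ∑ t, β₀ t * β t ≤ ∑ t, pPart (-β₀) t * pPart (-β) t := step1
        _ ≤ Real.sqrt (∑ t, pPart (-β₀) t ^ 2) * Real.sqrt (∑ t, pPart (-β) t ^ 2) := step2
        _ = n * norm2 (pPart (-β)) := by rw [hn_def, norm2, norm2]
    -- assemble
    have hexp : ∑ t, ((n⁻¹ • β₀ + θ) t) * (β t - β₀ t)
        = n⁻¹ * ((∑ t, β₀ t * β t) - n ^ 2) + ∑ t, θ t * (β t - β₀ t) := by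
      have : ∀ t, ((n⁻¹ • β₀ + θ) t) * (β t - β₀ t)
          = n⁻¹ * (β₀ t * β t - β₀ t ^ 2) + θ t * (β t - β₀ t) := by
        intro t
        simp only [Pi.add_apply, Pi.smul_apply, smul_eq_mul]
        ring
      rw [Finset.sum_congr rfl fun t _ => this t, Finset.sum_add_distrib, ← Finset.mul_sum,
        hnsq, Finset.sum_sub_distrib]
    rw [ge_iff_le, hexp, E1, hcoop₀, coop]
    have hb1 : n⁻¹ * ((∑ t, β₀ t * β t) - n ^ 2) ≤ norm2 (pPart (-β)) - n := by
      have h := mul_le_mul_of_nonneg_left (sub_le_sub_right E3 (n ^ 2)) (inv_nonneg.2 hn_nonneg)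
      calc n⁻¹ * ((∑ t, β₀ t * β t) - n ^ 2)
          ≤ n⁻¹ * (n * norm2 (pPart (-β)) - n ^ 2) := h
        _ = norm2 (pPart (-β)) - n := by field_simp
    linarith [E2]
end

section
/- For the one-group Cooperative-LASSO on ℝ^T with objective ½βᵀCβ + βᵀc + λ(‖(β)₊‖₂ + ‖(−β)₊‖₂), the point β̂ = 0 is optimal if and only if max(‖(−c)₊‖₂, ‖(c)₊‖₂) ≤ λ. -/
/-!
The objective is `f + λ g` with `f β = ½ βᵀCβ + βᵀc` convex and `g` positively homogeneous, so `0`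
is a minimiser iff the directional derivative `uᵀc + λ g u` at `0` is nonnegative for every `u`,
i.e. iff `uᵀ(-c) ≤ λ g u` for all `u`. Writing `u = u⁺ - u⁻`, `d = d⁺ - d⁻` gives
`uᵀd ≤ u⁺ᵀd⁺ + u⁻ᵀd⁻`, and Cauchy–Schwarz on each term shows that the dual norm of `g` is
`max ‖d⁺‖₂ ‖d⁻‖₂`, attained at `u = d⁺` or `u = -d⁻`.
-/

open Matrix Filter Topology

lemma nonneg_of_forall_pos_mul_add_nonneg {q s : ℝ} (h : ∀ ε > 0, 0 ≤ ε * q + s) : 0 ≤ s := by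
  have hlim : Tendsto (fun ε : ℝ => ε * q + s) (𝓝[>] 0) (𝓝 s) := by
    have : Continuous fun ε : ℝ => ε * q + s := by fun_prop
    simpa using (this.tendsto 0).mono_left nhdsWithin_le_nhds
  exact ge_of_tendsto hlim (eventually_nhdsWithin_of_forall h)

lemma posPart_mul_self (x : ℝ) : x⁺ * x = x⁺ ^ 2 := by
  rcases le_total x 0 with h | h
  · simp [posPart_eq_zero.2 h]
  · rw [posPart_eq_self.2 h, sq]

lemma mul_le_posPart_mul_add_negPart_mul (x y : ℝ) : x * y ≤ x⁺ * y⁺ + x⁻ * y⁻ := by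
  conv_lhs => rw [← posPart_sub_negPart x, ← posPart_sub_negPart y]
  nlinarith [mul_nonneg (posPart_nonneg x) (negPart_nonneg y),
    mul_nonneg (negPart_nonneg x) (posPart_nonneg y)]

lemma posPart_mul_of_nonneg {r : ℝ} (hr : 0 ≤ r) (x : ℝ) : (r * x)⁺ = r * x⁺ := by
  rw [posPart_def, posPart_def, mul_max_of_nonneg _ _ hr, mul_zero]

namespace Pi

variable {ι : Type*}

lemma posPart_smul_of_nonneg {r : ℝ} (hr : 0 ≤ r) (v : ι → ℝ) : (r • v)⁺ = r • v⁺ := by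
  ext i
  exact posPart_mul_of_nonneg hr (v i)

lemma negPart_smul_of_nonneg {r : ℝ} (hr : 0 ≤ r) (v : ι → ℝ) : (r • v)⁻ = r • v⁻ := by
  rw [← posPart_neg, ← smul_neg, posPart_smul_of_nonneg hr, posPart_neg]

end Pi

namespace CoopLasso

variable {ι : Type*} [Fintype ι]

noncomputable def euclidNorm (v : ι → ℝ) : ℝ := √(∑ i, v i ^ 2)

noncomputable def coopNorm (v : ι → ℝ) : ℝ := euclidNorm v⁺ + euclidNorm v⁻

noncomputable def objective (C : Matrix ι ι ℝ) (c : ι → ℝ) (lam : ℝ) (β : ι → ℝ) : ℝ :=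
  (1 / 2) * (β ⬝ᵥ (C *ᵥ β)) + β ⬝ᵥ c + lam * coopNorm β

lemma euclidNorm_nonneg (v : ι → ℝ) : 0 ≤ euclidNorm v := Real.sqrt_nonneg _

@[simp]
lemma euclidNorm_zero : euclidNorm (0 : ι → ℝ) = 0 := by simp [euclidNorm]

lemma euclidNorm_smul_of_nonneg {r : ℝ} (hr : 0 ≤ r) (v : ι → ℝ) :
    euclidNorm (r • v) = r * euclidNorm v := by
  simp only [euclidNorm, Pi.smul_apply, smul_eq_mul, mul_pow, ← Finset.mul_sum]
  rw [Real.sqrt_mul (sq_nonneg r), Real.sqrt_sq hr]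

lemma sum_mul_le_euclidNorm_mul (a b : ι → ℝ) :
    ∑ i, a i * b i ≤ euclidNorm a * euclidNorm b :=
  Real.sum_mul_le_sqrt_mul_sqrt _ a b

lemma posPart_dotProduct_self (v : ι → ℝ) : v⁺ ⬝ᵥ v = euclidNorm v⁺ ^ 2 := by
  rw [euclidNorm, Real.sq_sqrt (Finset.sum_nonneg fun i _ => sq_nonneg _)]
  exact Finset.sum_congr rfl fun i _ => posPart_mul_self (v i)

lemma coopNorm_nonneg (v : ι → ℝ) : 0 ≤ coopNorm v :=
  add_nonneg (euclidNorm_nonneg _) (euclidNorm_nonneg _)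

lemma coopNorm_smul_of_nonneg {r : ℝ} (hr : 0 ≤ r) (v : ι → ℝ) :
    coopNorm (r • v) = r * coopNorm v := by
  rw [coopNorm, coopNorm, Pi.posPart_smul_of_nonneg hr, Pi.negPart_smul_of_nonneg hr,
    euclidNorm_smul_of_nonneg hr, euclidNorm_smul_of_nonneg hr, mul_add]

lemma coopNorm_neg (v : ι → ℝ) : coopNorm (-v) = coopNorm v := by
  rw [coopNorm, coopNorm, posPart_neg, negPart_neg, add_comm]

lemma coopNorm_posPart (v : ι → ℝ) : coopNorm v⁺ = euclidNorm v⁺ := by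
  rw [coopNorm, posPart_eq_self.2 (posPart_nonneg v), negPart_eq_zero.2 (posPart_nonneg v),
    euclidNorm_zero, add_zero]

lemma dotProduct_le_coopNorm_mul_max (u d : ι → ℝ) :
    u ⬝ᵥ d ≤ coopNorm u * max (euclidNorm d⁺) (euclidNorm d⁻) := by
  calc u ⬝ᵥ d ≤ ∑ i, u⁺ i * d⁺ i + ∑ i, u⁻ i * d⁻ i := by
        rw [← Finset.sum_add_distrib]
        exact Finset.sum_le_sum fun i _ => mul_le_posPart_mul_add_negPart_mul (u i) (d i)
    _ ≤ euclidNorm u⁺ * euclidNorm d⁺ + euclidNorm u⁻ * euclidNorm d⁻ :=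
        add_le_add (sum_mul_le_euclidNorm_mul _ _) (sum_mul_le_euclidNorm_mul _ _)
    _ ≤ euclidNorm u⁺ * max (euclidNorm d⁺) (euclidNorm d⁻)
          + euclidNorm u⁻ * max (euclidNorm d⁺) (euclidNorm d⁻) :=
        add_le_add (mul_le_mul_of_nonneg_left (le_max_left _ _) (euclidNorm_nonneg _))
          (mul_le_mul_of_nonneg_left (le_max_right _ _) (euclidNorm_nonneg _))
    _ = coopNorm u * max (euclidNorm d⁺) (euclidNorm d⁻) := by rw [coopNorm, add_mul]

lemma euclidNorm_posPart_le_of_dotProduct_le {v : ι → ℝ} {lam : ℝ} (hlam : 0 ≤ lam)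
    (hv : v⁺ ⬝ᵥ v ≤ lam * coopNorm v⁺) : euclidNorm v⁺ ≤ lam := by
  rw [posPart_dotProduct_self, coopNorm_posPart, sq] at hv
  rcases (euclidNorm_nonneg v⁺).eq_or_lt with h0 | hpos
  · rwa [← h0]
  · exact le_of_mul_le_mul_right hv hpos

theorem forall_dotProduct_le_mul_coopNorm_iff {d : ι → ℝ} {lam : ℝ} (hlam : 0 ≤ lam) :
    (∀ u, u ⬝ᵥ d ≤ lam * coopNorm u) ↔ max (euclidNorm d⁺) (euclidNorm d⁻) ≤ lam := by
  refine ⟨fun h => max_le ?_ ?_, fun h u => ?_⟩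
  · exact euclidNorm_posPart_le_of_dotProduct_le hlam (h _)
  · rw [← posPart_neg]
    refine euclidNorm_posPart_le_of_dotProduct_le hlam ?_
    simpa [dotProduct_neg, coopNorm_neg] using h (-(-d)⁺)
  · calc u ⬝ᵥ d ≤ coopNorm u * max (euclidNorm d⁺) (euclidNorm d⁻) :=
          dotProduct_le_coopNorm_mul_max u d
      _ ≤ lam * coopNorm u := by
          rw [mul_comm]
          exact mul_le_mul_of_nonneg_right h (coopNorm_nonneg u)

lemma objective_smul (C : Matrix ι ι ℝ) (c : ι → ℝ) (lam : ℝ) {ε : ℝ} (hε : 0 ≤ ε)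
    (u : ι → ℝ) :
    objective C c lam (ε • u)
      = ε * (ε * (u ⬝ᵥ (C *ᵥ u) / 2) + (lam * coopNorm u + u ⬝ᵥ c)) := by
  rw [objective, coopNorm_smul_of_nonneg hε, mulVec_smul, smul_dotProduct, dotProduct_smul,
    smul_dotProduct, smul_eq_mul, smul_eq_mul, smul_eq_mul]
  ring

theorem forall_objective_nonneg_iff {C : Matrix ι ι ℝ} (hC : C.PosSemidef) (c : ι → ℝ)
    (lam : ℝ) :
    (∀ β, 0 ≤ objective C c lam β) ↔ ∀ u, u ⬝ᵥ (-c) ≤ lam * coopNorm u := by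
  simp only [dotProduct_neg, neg_le_iff_add_nonneg]
  refine ⟨fun h u => nonneg_of_forall_pos_mul_add_nonneg (q := u ⬝ᵥ (C *ᵥ u) / 2)
    fun ε hε => ?_, fun h β => ?_⟩
  · have := h (ε • u)
    rw [objective_smul C c lam hε.le] at this
    exact nonneg_of_mul_nonneg_right this hε
  · have hquad : 0 ≤ β ⬝ᵥ (C *ᵥ β) := by simpa using hC.dotProduct_mulVec_nonneg β
    have := h β
    rw [objective]
    linarith

end CoopLasso

open CoopLasso

theorem coop_lasso_zero_optimal_general (T : ℕ)
    (C : Matrix (Fin T) (Fin T) ℝ) (hCpsd : C.PosSemidef)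
    (c : Fin T → ℝ) (lam : ℝ) (hlam : 0 < lam) :
    (∀ β : Fin T → ℝ,
        (0 : ℝ) ≤
        (1 / 2) * (β ⬝ᵥ (C *ᵥ β)) + β ⬝ᵥ c
          + lam * (Real.sqrt (∑ t, (max (β t) 0) ^ 2)
                   + Real.sqrt (∑ t, (max (-β t) 0) ^ 2))) ↔
    max (Real.sqrt (∑ t, (max (-c t) 0) ^ 2))
        (Real.sqrt (∑ t, (max (c t) 0) ^ 2)) ≤ lam := by
  change (∀ β, 0 ≤ objective C c lam β) ↔ max (euclidNorm c⁻) (euclidNorm c⁺) ≤ lam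
  rw [forall_objective_nonneg_iff hCpsd, forall_dotProduct_le_mul_coopNorm_iff hlam.le,
    posPart_neg, negPart_neg]

/-- For the one-group Cooperative-LASSO on `ℝ^T` with objective
`½βᵀCβ + βᵀc + λ(‖(β)₊‖₂ + ‖(−β)₊‖₂)`, the point `β̂ = 0` is optimal iff
`max(‖(−c)₊‖₂, ‖(c)₊‖₂) ≤ λ`. -/
theorem coop_lasso_zero_optimal (T : ℕ)
    (C : Matrix (Fin T) (Fin T) ℝ) (hCsym : C.IsSymm) (hCpsd : C.PosSemidef)
    (c : Fin T → ℝ) (lam : ℝ) (hlam : 0 < lam) :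
    (∀ β : Fin T → ℝ,
        (0 : ℝ) ≤
        (1 / 2) * (β ⬝ᵥ (C *ᵥ β)) + β ⬝ᵥ c
          + lam * (Real.sqrt (∑ t, (max (β t) 0) ^ 2)
                   + Real.sqrt (∑ t, (max (-β t) 0) ^ 2))) ↔
    max (Real.sqrt (∑ t, (max (-c t) 0) ^ 2))
        (Real.sqrt (∑ t, (max (c t) 0) ^ 2)) ≤ lam :=
  coop_lasso_zero_optimal_general T C hCpsd c lam hlam
end
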